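/- Let X be a metric space, A a factor subset of X through x with cofactor B, and suppose A is isometric to a Hilbert space H₁ and B decomposes further as B ≅ ℝ × Z with x corresponding to a point on the ℝ × {z₀} fiber. Then the subset of X corresponding to (ℝ × {z₀}) × A ≅ ℝ × H₁ under these identifications is a factor subset of X through x isometric to the Hilbert space ℝ × H₁, and it strictly contains A. -/

import Mathlib

/-- `IsL2Prod Φ` means `Φ : X → Y × Z` is a bijection identifying `X` with the
ℓ²-direct product of the metric spaces `Y` and `Z`. -/
def IsL2Prod {X Y Z : Type} [MetricSpace X] [MetricSpace Y] [MetricSpace Z]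
    (Φ : X → Y × Z) : Prop :=
  Function.Bijective Φ ∧
    ∀ p q : X, dist p q ^ 2 = dist (Φ p).1 (Φ q).1 ^ 2 + dist (Φ p).2 (Φ q).2 ^ 2

/-- `A` is a factor subset of `X` through `x`: some ℓ²-product decomposition of `X`
carries `A` onto the fiber of the first factor through `x`. -/
def IsFactorSubset {X : Type} [MetricSpace X] (A : Set X) (x : X) : Prop :=
  x ∈ A ∧ ∃ (Y Z : Type) (_ : MetricSpace Y) (_ : MetricSpace Z) (Φ : X → Y × Z),
    IsL2Prod Φ ∧ A = {p : X | (Φ p).2 = (Φ x).2}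

/-- A line in a metric space: a subset isometric to `ℝ`. -/
def IsLine {X : Type} [MetricSpace X] (ℓ : Set X) : Prop :=
  ∃ γ : ℝ → X, Isometry γ ∧ Set.range γ = ℓ

/-- A splitting line: a line carried onto a fiber `ℝ × {z₀}` by some
ℓ²-product decomposition `X ≅ ℝ × Z`. -/
def IsSplittingLine {X : Type} [MetricSpace X] (ℓ : Set X) : Prop :=
  IsLine ℓ ∧ ∃ (Z : Type) (_ : MetricSpace Z) (Φ : X → ℝ × Z) (z₀ : Z),
    IsL2Prod Φ ∧ Φ '' ℓ = Set.univ ×ˢ {z₀}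

/-- `π` is the nearest-point projection onto `A`: every point has `π p` as its
unique nearest point in `A`. -/
def IsNearestPointProj {X : Type} [MetricSpace X] (A : Set X) (π : X → X) : Prop :=
  ∀ p : X, π p ∈ A ∧ (∀ a ∈ A, dist p (π p) ≤ dist p a) ∧
    ∀ a ∈ A, dist p a = dist p (π p) → a = π p

/-- The subset `A`, with the induced metric, is isometric to a real Hilbert space. -/
def IsHilbertSubset {X : Type} [MetricSpace X] (A : Set X) : Prop :=
  ∃ (H : Type) (_ : NormedAddCommGroup H) (_ : InnerProductSpace ℝ H) (_ : CompleteSpace H)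
    (f : A → H), Isometry f ∧ Function.Surjective f

/-!
Write `D p = (πA p, πB p)`. Pythagoras in the decomposition `X ≅ A' × B'` makes `D` an
ℓ²-product decomposition `X ≅ A × B`, and composing it with `Ψ : B ≅ ℝ × Z` regroups `X` as
`(ℝ × A) × Z`. The set in question is the fiber of this decomposition through `x`, so it is a
factor subset isometric to `ℝ × A ≅ ℝ × H₁`. It contains `A`, since `πB` collapses `A` to `x`, and
it contains the whole line of `B` through `x`, which meets `A` only in `x`.
-/

lemma WithLp.prod_dist_sq {α β : Type*} [Dist α] [Dist β] (u v : WithLp 2 (α × β)) :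
    dist u v ^ 2 = dist u.fst v.fst ^ 2 + dist u.snd v.snd ^ 2 := by
  rw [WithLp.prod_dist_eq_add (by norm_num), ENNReal.toReal_ofNat, Real.rpow_two, Real.rpow_two,
    ← Real.sqrt_eq_rpow, Real.sq_sqrt (by positivity)]

lemma IsNearestPointProj.apply_eq_self {X : Type} [MetricSpace X] {S : Set X} {π : X → X}
    (hπ : IsNearestPointProj S π) {s : X} (hs : s ∈ S) : π s = s :=
  ((hπ s).2.2 s hs (by rw [dist_self, eq_comm, ← dist_le_zero]; simpa using (hπ s).2.1 s hs)).symm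

namespace IsL2Prod

variable {X Y Z : Type} [MetricSpace X] [MetricSpace Y] [MetricSpace Z] {Φ : X → Y × Z}

lemma swap (hΦ : IsL2Prod Φ) : IsL2Prod (Prod.swap ∘ Φ) :=
  ⟨Prod.swap_bijective.comp hΦ.1, fun p q => by rw [hΦ.2 p q, add_comm]; rfl⟩

lemma proj_fiber_snd (hΦ : IsL2Prod Φ) {z : Z} {π : X → X}
    (hπ : IsNearestPointProj {p | (Φ p).2 = z} π) (p : X) : Φ (π p) = ((Φ p).1, z) := by
  obtain ⟨a, ha⟩ := hΦ.1.2 ((Φ p).1, z)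
  obtain ⟨hπp, hmin, huniq⟩ := hπ p
  have haS : a ∈ {q | (Φ q).2 = z} := by simp [ha]
  have hle : dist p a ≤ dist p (π p) := by
    rw [← sq_le_sq₀ dist_nonneg dist_nonneg, hΦ.2, hΦ.2, ha, hπp.out, dist_self]
    nlinarith [sq_nonneg (dist (Φ p).1 (Φ (π p)).1)]
  rw [← huniq a haS (le_antisymm hle (hmin a haS)), ha]

lemma proj_fiber_fst (hΦ : IsL2Prod Φ) {y : Y} {π : X → X}
    (hπ : IsNearestPointProj {p | (Φ p).1 = y} π) (p : X) : Φ (π p) = (y, (Φ p).2) :=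
  congrArg Prod.swap (hΦ.swap.proj_fiber_snd hπ p)

lemma isometry_fiber (hΦ : IsL2Prod Φ) (z : Z) :
    Isometry (fun p : {p | (Φ p).2 = z} => (Φ p).1) := by
  refine Isometry.of_dist_eq fun p q => ?_
  rw [← sq_eq_sq₀ dist_nonneg dist_nonneg, Subtype.dist_eq, hΦ.2, p.2.out, q.2.out, dist_self]
  ring

lemma surjective_fiber (hΦ : IsL2Prod Φ) (z : Z) :
    Function.Surjective (fun p : {p | (Φ p).2 = z} => (Φ p).1) := fun y =>
  let ⟨p, hp⟩ := hΦ.1.2 (y, z)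
  ⟨⟨p, by simp [hp]⟩, by simp [hp]⟩

lemma reassoc {V W : Type} [MetricSpace V] [MetricSpace W] {Φ : X → Y × W} {Ψ : W → V × Z}
    (hΦ : IsL2Prod Φ) (hΨ : IsL2Prod Ψ) :
    IsL2Prod fun p => (WithLp.toLp 2 ((Ψ (Φ p).2).1, (Φ p).1), (Ψ (Φ p).2).2) := by
  refine ⟨⟨fun p q h => ?_, fun ⟨u, z⟩ => ?_⟩, fun p q => ?_⟩
  · simp only [Prod.mk.injEq, WithLp.toLp.injEq] at h
    exact hΦ.1.1 (Prod.ext h.1.2 (hΨ.1.1 (Prod.ext h.1.1 h.2)))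
  · obtain ⟨w, hw⟩ := hΨ.1.2 (u.fst, z)
    obtain ⟨p, hp⟩ := hΦ.1.2 (u.snd, w)
    exact ⟨p, by simp [hp, hw]; rfl⟩
  · rw [WithLp.prod_dist_sq, hΦ.2, hΨ.2]
    simp only [WithLp.toLp_fst, WithLp.toLp_snd]
    ring

end IsL2Prod

section FactorSubset

variable {X : Type} [MetricSpace X] {A : Set X} {x : X} {πA πB : X → X}

lemma IsFactorSubset.isL2Prod_proj (hA : IsFactorSubset A x) (hπA : IsNearestPointProj A πA)
    (hπB : IsNearestPointProj (πA ⁻¹' {x}) πB) :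
    IsL2Prod fun p => ((⟨πA p, (hπA p).1⟩ : A), (⟨πB p, (hπB p).1⟩ : ↥(πA ⁻¹' {x}))) := by
  obtain ⟨-, Y, Z, _, _, Φ, hΦ, rfl⟩ := hA
  have hΦA : ∀ p, Φ (πA p) = ((Φ p).1, (Φ x).2) := hΦ.proj_fiber_snd hπA
  have hB : πA ⁻¹' {x} = {p | (Φ p).1 = (Φ x).1} := by
    ext p
    simp only [Set.mem_preimage, Set.mem_singleton_iff, Set.mem_ofPred_eq, ← hΦ.1.1.eq_iff, hΦA,
      Prod.ext_iff, and_true]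
  have hΦB : ∀ p, Φ (πB p) = ((Φ x).1, (Φ p).2) := hΦ.proj_fiber_fst (hB ▸ hπB)
  refine ⟨⟨fun p q h => ?_, fun ⟨a, b⟩ => ?_⟩, fun p q => ?_⟩
  · simp only [Prod.mk.injEq, Subtype.mk.injEq] at h
    have h1 := congrArg (fun r => (Φ r).1) h.1
    have h2 := congrArg (fun r => (Φ r).2) h.2
    simp only [hΦA, hΦB] at h1 h2
    exact hΦ.1.1 (Prod.ext h1 h2)
  · obtain ⟨p, hp⟩ := hΦ.1.2 ((Φ a).1, (Φ b).2)
    have ha : (Φ a).2 = (Φ x).2 := a.2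
    have hb : (Φ b).1 = (Φ x).1 := by simpa [hB] using b.2
    refine ⟨p, Prod.ext (Subtype.ext (hΦ.1.1 ?_)) (Subtype.ext (hΦ.1.1 ?_))⟩
    · simp [hΦA, hp, ← ha]
    · simp [hΦB, hp, ← hb]
  · rw [Subtype.dist_eq, Subtype.dist_eq, hΦ.2, hΦ.2 (πA p), hΦ.2 (πB p), hΦA, hΦA, hΦB, hΦB]
    simp

lemma IsFactorSubset.proj_cofactor_of_mem (hA : IsFactorSubset A x)
    (hπA : IsNearestPointProj A πA) (hπB : IsNearestPointProj (πA ⁻¹' {x}) πB) {a : X}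
    (ha : a ∈ A) : πB a = x := by
  have hπAx : πA x = x := hπA.apply_eq_self hA.1
  have hπBx : πB x = x := hπB.apply_eq_self hπAx
  have h := (hA.isL2Prod_proj hπA hπB).2 a x
  simp only [Subtype.dist_eq, hπA.apply_eq_self ha, hπAx, hπBx] at h
  simpa using h

end FactorSubset

theorem hilbert_factor_enlarged_by_line_general {X H₁ Z : Type} [MetricSpace X]
    [NormedAddCommGroup H₁]
    [MetricSpace Z]
    (x : X) (A : Set X) (hA : IsFactorSubset A x)
    (πA : X → X) (hπA : IsNearestPointProj A πA)
    (B : Set X) (hB : B = πA ⁻¹' {x}) (hxB : x ∈ B)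
    (πB : X → X) (hπB : IsNearestPointProj B πB)
    (f : A → H₁) (hf : Isometry f) (hfsurj : Function.Surjective f)
    (Ψ : B → ℝ × Z) (hΨ : IsL2Prod Ψ) :
    IsFactorSubset
      {p : X | (Ψ ⟨πB p, (hπB p).1⟩).2 = (Ψ ⟨x, hxB⟩).2} x ∧
    (∃ g : ({p : X | (Ψ ⟨πB p, (hπB p).1⟩).2 = (Ψ ⟨x, hxB⟩).2} : Set X) →
        WithLp 2 (ℝ × H₁), Isometry g ∧ Function.Surjective g) ∧
    A ⊂ {p : X | (Ψ ⟨πB p, (hπB p).1⟩).2 = (Ψ ⟨x, hxB⟩).2} := by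
  subst hB
  have hΘ := (hA.isL2Prod_proj hπA hπB).reassoc hΨ
  set z := (Ψ ⟨x, hxB⟩).2
  have hproj : ∀ {p} (hp : p ∈ πA ⁻¹' {x}), (⟨πB p, (hπB p).1⟩ : ↥(πA ⁻¹' {x})) = ⟨p, hp⟩ :=
    fun hp => Subtype.ext (hπB.apply_eq_self hp)
  have hAC : A ⊆ {p | (Ψ ⟨πB p, (hπB p).1⟩).2 = z} := fun a ha => by
    have h : (⟨πB a, (hπB a).1⟩ : ↥(πA ⁻¹' {x})) = ⟨x, hxB⟩ :=
      Subtype.ext (hA.proj_cofactor_of_mem hπA hπB ha)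
    simp only [Set.mem_ofPred_eq, h, z]
  have hg : Isometry (WithLp.map 2 (Prod.map (id : ℝ → ℝ) f)) := isometry_id.withLpProdMap 2 hf
  have hgs : Function.Surjective (WithLp.map 2 (Prod.map (id : ℝ → ℝ) f)) :=
    (WithLp.toLp_surjective 2).comp
      ((Function.surjective_id.prodMap hfsurj).comp (WithLp.ofLp_surjective 2))
  refine ⟨⟨hAC hA.1, _, _, _, _, _, hΘ, by simp only [hproj hxB, z]⟩,
    ⟨_, hg.comp (hΘ.isometry_fiber z), hgs.comp (hΘ.surjective_fiber z)⟩,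
    (Set.ssubset_iff_of_subset hAC).2 ?_⟩
  obtain ⟨b, hb⟩ := hΨ.1.2 ((Ψ ⟨x, hxB⟩).1 + 1, z)
  refine ⟨b, by simp only [Set.mem_ofPred_eq, hproj b.2, hb], fun hbA => ?_⟩
  have hbx : b = ⟨x, hxB⟩ := Subtype.ext ((hπA.apply_eq_self hbA).symm.trans b.2)
  rw [hbx, Prod.ext_iff] at hb
  simp at hb

/-- if the cofactor `B` of a Hilbert factor subset `A` through `x`
splits off a line through (the image of) `x`, then the set corresponding to
`(ℝ × {z₀}) × A ≅ ℝ × H₁` is a factor subset through `x`, isometric to the Hilbert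
space `ℝ × H₁`, strictly containing `A`. -/
theorem hilbert_factor_enlarged_by_line {X H₁ Z : Type} [MetricSpace X]
    [NormedAddCommGroup H₁] [InnerProductSpace ℝ H₁] [CompleteSpace H₁]
    [MetricSpace Z]
    (x : X) (A : Set X) (hA : IsFactorSubset A x)
    (πA : X → X) (hπA : IsNearestPointProj A πA)
    (B : Set X) (hB : B = πA ⁻¹' {x}) (hxB : x ∈ B)
    (πB : X → X) (hπB : IsNearestPointProj B πB)
    (f : A → H₁) (hf : Isometry f) (hfsurj : Function.Surjective f)
    (Ψ : B → ℝ × Z) (hΨ : IsL2Prod Ψ) :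
    IsFactorSubset
      {p : X | (Ψ ⟨πB p, (hπB p).1⟩).2 = (Ψ ⟨x, hxB⟩).2} x ∧
    (∃ g : ({p : X | (Ψ ⟨πB p, (hπB p).1⟩).2 = (Ψ ⟨x, hxB⟩).2} : Set X) →
        WithLp 2 (ℝ × H₁), Isometry g ∧ Function.Surjective g) ∧
    A ⊂ {p : X | (Ψ ⟨πB p, (hπB p).1⟩).2 = (Ψ ⟨x, hxB⟩).2} :=
  hilbert_factor_enlarged_by_line_general x A hA πA hπA B hB hxB πB hπB f hf hfsurj Ψ hΨ
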